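/- arXiv:1602.00700 — 6 statements merged into one kernel-verified Lean document; each statement's English description precedes it below -/
import Mathlib

section
/- The polynomial 4(x³ - 2)(x - ∛2) is a sum of squares of real polynomials. -/
open Polynomial

/-- The polynomial 4(x³ - 2)(x - ∛2) is a sum of squares of real polynomials. -/
theorem sos_quartic :
    ∃ (ℓ : ℕ) (g : Fin ℓ → Polynomial ℝ),
      C 4 * (X ^ 3 - C 2) * (X - C ((2 : ℝ) ^ ((1 : ℝ) / 3)))
        = ∑ j, (g j) ^ 2 := by
  set c : ℝ := (2 : ℝ) ^ ((1 : ℝ) / 3) with hcdef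
  have hc : c ^ 3 = 2 := by
    rw [hcdef, ← Real.rpow_natCast ((2:ℝ) ^ ((1:ℝ)/3)) 3, ← Real.rpow_mul (by norm_num)]
    norm_num
  have hs : Real.sqrt 3 ^ 2 = 3 := Real.sq_sqrt (by norm_num)
  refine ⟨2, ![(X - C c) * (C 2 * X + C c), C (Real.sqrt 3 * c) * (X - C c)], ?_⟩
  rw [Fin.sum_univ_two]
  simp only [Matrix.cons_val_zero, Matrix.cons_val_one, Matrix.head_cons]
  have h1 : (C c : Polynomial ℝ) ^ 3 = 2 := by rw [← C_pow, hc]; simp [map_ofNat]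
  have h2 : (C (Real.sqrt 3) : Polynomial ℝ) ^ 2 = 3 := by rw [← C_pow, hs]; simp [map_ofNat]
  have hmul : (C (Real.sqrt 3 * c) : Polynomial ℝ) = C (Real.sqrt 3) * C c := by
    rw [← C_mul]
  rw [hmul]
  simp only [map_ofNat]
  linear_combination ((4:Polynomial ℝ) * (X - C c)) * h1 - ((C c)^2 * (X - C c)^2) * h2
end

section
/- The 3×3 real symmetric matrix C with rows (8∛2, -4, -2∛4), (-4, 4∛4, -2∛2), (-2∛4, -2∛2, 4) is positive semidefinite, and [1, x, x²]·C·[1, x, x²]^T = 4(x³-2)(x-∛2) as polynomials in ℝ[x]. -/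
open Polynomial Matrix

/-- The Gram matrix C from the paper. -/
noncomputable def Cmat : Matrix (Fin 3) (Fin 3) ℝ :=
  let c : ℝ := (2 : ℝ) ^ ((1 : ℝ) / 3)
  !![8 * c, -4, -2 * c ^ 2;
     -4, 4 * c ^ 2, -2 * c;
     -2 * c ^ 2, -2 * c, 4]

/-- C is positive semidefinite and [1, x, x²]·C·[1, x, x²]ᵀ = 4(x³-2)(x-∛2). -/
theorem gram_matrix_example :
    (∀ y : Fin 3 → ℝ, 0 ≤ y ⬝ᵥ Cmat.mulVec y) ∧
    (∑ i : Fin 3, ∑ j : Fin 3,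
        C (Cmat i j) * (![1, X, X ^ 2] i) * (![1, X, X ^ 2] j)
      = C 4 * (X ^ 3 - C 2) * (X - C ((2 : ℝ) ^ ((1 : ℝ) / 3)))) := by
  have hc : ((2 : ℝ) ^ ((1 : ℝ) / 3)) ^ 3 = 2 := by
    rw [← Real.rpow_natCast ((2:ℝ) ^ ((1:ℝ)/3)) 3, ← Real.rpow_mul (by norm_num)]
    norm_num
  set c : ℝ := (2 : ℝ) ^ ((1 : ℝ) / 3) with hcdef
  constructor
  · intro y
    have h : y ⬝ᵥ Cmat.mulVec y =
        (-(c^2) * y 0 - c * y 1 + 2 * y 2) ^ 2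
        + 3 * (c^2 * y 0 - c * y 1) ^ 2 := by
      simp only [Cmat, dotProduct, mulVec, Fin.sum_univ_three, Matrix.cons_val',
        Matrix.of_apply, Matrix.cons_val_zero, Matrix.cons_val_one, Matrix.head_cons,
        Matrix.empty_val', Matrix.cons_val_fin_one, Matrix.head_fin_const,
        Matrix.cons_val_two, Matrix.tail_cons, ← hcdef]
      linear_combination (4 * y 0 * y 1 - 4 * c * y 0 ^ 2) * hc
    rw [h]
    positivity
  · simp only [Cmat, Fin.sum_univ_three, Matrix.cons_val',
      Matrix.of_apply, Matrix.cons_val_zero, Matrix.cons_val_one, Matrix.head_cons,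
      Matrix.empty_val', Matrix.cons_val_fin_one, Matrix.head_fin_const,
      Matrix.cons_val_two, Matrix.tail_cons, ← hcdef,
      Polynomial.C_mul, Polynomial.C_neg, map_ofNat, Polynomial.C_pow]
    ring
end

section
/- The real radical of the ideal ⟨x² + y² + z² - 1, x² + y² + z - 1, x⟩ in ℝ[x,y,z] equals ⟨x, y² + z - 1, yz, z² - z⟩. -/
open MvPolynomial

/-- The real zero set of an ideal. -/
def zeroSet {σ : Type*} (I : Ideal (MvPolynomial σ ℝ)) : Set (σ → ℝ) :=
  {x | ∀ f ∈ I, MvPolynomial.eval x f = 0}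

/-- The ideal of polynomials vanishing on a set S ⊆ ℝⁿ. -/
noncomputable def vanishIdeal {σ : Type*} (S : Set (σ → ℝ)) : Ideal (MvPolynomial σ ℝ) where
  carrier := {p | ∀ x ∈ S, MvPolynomial.eval x p = 0}
  add_mem' := by intro p q hp hq x hx; simp [hp x hx, hq x hx]
  zero_mem' := by intro x hx; simp
  smul_mem' := by intro c p hp x hx; simp [hp x hx]

/-- The real radical of an ideal I: polynomials vanishing on the real zero set of I. -/
noncomputable def realRadical {σ : Type*} (I : Ideal (MvPolynomial σ ℝ)) : Ideal (MvPolynomial σ ℝ) :=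
  vanishIdeal (zeroSet I)

/-!
Subtracting the first two generators gives `z² = z`, so the real zero set consists of the three
points `(0, ±1, 0)` and `(0, 0, 1)`; it is also the zero set of `J = ⟨x, y² + z - 1, yz, z² - z⟩`.
Modulo `J` every polynomial reduces to some `a + b y + c z`, and if it vanishes at the three points
then `a = b = c = 0`. Hence `J` is the whole vanishing ideal of its zero set.
-/

section

variable {σ : Type*}

lemma mem_zeroSet_span {S : Set (MvPolynomial σ ℝ)} {x : σ → ℝ} :
    x ∈ zeroSet (Ideal.span S) ↔ ∀ f ∈ S, eval x f = 0 :=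
  ⟨fun h f hf => h f (Ideal.subset_span hf),
    fun h _ hf => Ideal.span_le (I := RingHom.ker (eval x)) |>.2 h hf⟩

lemma le_vanishIdeal_iff {I : Ideal (MvPolynomial σ ℝ)} {S : Set (σ → ℝ)} :
    I ≤ vanishIdeal S ↔ S ⊆ zeroSet I :=
  ⟨fun h _ hx _ hf => h hf _ hx, fun h _ hf _ hx => h hx _ hf⟩

end

noncomputable abbrev spheroloidIdeal : Ideal (MvPolynomial (Fin 3) ℝ) :=
  Ideal.span {(X 0) ^ 2 + (X 1) ^ 2 + (X 2) ^ 2 - 1, (X 0) ^ 2 + (X 1) ^ 2 + X 2 - 1, X 0}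

noncomputable abbrev threePointsIdeal : Ideal (MvPolynomial (Fin 3) ℝ) :=
  Ideal.span {X 0, (X 1) ^ 2 + X 2 - 1, X 1 * X 2, (X 2) ^ 2 - X 2}

lemma zeroSet_spheroloidIdeal : zeroSet spheroloidIdeal = zeroSet threePointsIdeal := by
  ext x
  simp only [mem_zeroSet_span, Set.mem_insert_iff, Set.mem_singleton_iff, forall_eq_or_imp,
    forall_eq, map_sub, map_add, map_mul, map_pow, map_one, eval_X]
  constructor
  · rintro ⟨hsphere, hparaboloid, hx⟩
    have hz : x 2 ^ 2 - x 2 = 0 := by linarith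
    have hy : x 1 ^ 2 + x 2 - 1 = 0 := by linear_combination hparaboloid - x 0 * hx
    refine ⟨hx, hy, ?_, hz⟩
    -- `(y z)² = (1 - z) z² = z (z - z²) = 0`
    exact pow_eq_zero_iff two_ne_zero |>.1 (by linear_combination x 2 ^ 2 * hy - x 2 * hz)
  · rintro ⟨hx, hy, -, hz⟩
    exact ⟨by linear_combination hy + hz + x 0 * hx, by linear_combination hy + x 0 * hx, hx⟩

lemma exists_mk_eq_affine (p : MvPolynomial (Fin 3) ℝ) :
    ∃ a b c : ℝ, Ideal.Quotient.mk threePointsIdeal p =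
      Ideal.Quotient.mk threePointsIdeal (C a + C b * X 1 + C c * X 2) := by
  set π := Ideal.Quotient.mk threePointsIdeal
  have rel : ∀ f ∈ ({X 0, (X 1) ^ 2 + X 2 - 1, X 1 * X 2, (X 2) ^ 2 - X 2} :
      Set (MvPolynomial (Fin 3) ℝ)), π f = 0 := fun f hf =>
    Ideal.Quotient.eq_zero_iff_mem.2 (Ideal.subset_span hf)
  simp only [Set.mem_insert_iff, Set.mem_singleton_iff, forall_eq_or_imp, forall_eq, map_sub,
    map_add, map_mul, map_pow, map_one] at rel
  obtain ⟨hx, hy, hyz, hz⟩ := rel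
  induction p using MvPolynomial.induction_on with
  | C a => exact ⟨a, 0, 0, by simp⟩
  | add p q hp hq =>
    obtain ⟨a, b, c, hp⟩ := hp
    obtain ⟨a', b', c', hq⟩ := hq
    refine ⟨a + a', b + b', c + c', ?_⟩
    simp only [map_add, map_mul] at hp hq ⊢
    linear_combination hp + hq
  | mul_X p i hp =>
    obtain ⟨a, b, c, hp⟩ := hp
    simp only [map_add, map_mul] at hp ⊢
    rw [hp]
    fin_cases i <;> simp only [Fin.zero_eta, Fin.mk_one, Fin.reduceFinMk]
    · exact ⟨0, 0, 0, by simp [hx]⟩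
    · refine ⟨b, a, -b, ?_⟩
      simp only [map_neg]
      linear_combination π (C b) * hy + π (C c) * hyz
    · refine ⟨0, 0, a + c, ?_⟩
      simp only [map_zero, map_add]
      linear_combination π (C b) * hyz + π (C c) * hz

lemma vanishIdeal_zeroSet_threePointsIdeal :
    vanishIdeal (zeroSet threePointsIdeal) = threePointsIdeal := by
  refine le_antisymm (fun p hp => ?_) (le_vanishIdeal_iff.2 subset_rfl)
  obtain ⟨a, b, c, hmk⟩ := exists_mk_eq_affine p
  have hr : p - (C a + C b * X 1 + C c * X 2) ∈ threePointsIdeal := Ideal.Quotient.eq.1 hmk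
  have affine_vanishes : ∀ x ∈ zeroSet threePointsIdeal, a + b * x 1 + c * x 2 = 0 :=
    fun x hx => by
      have hrx := hx _ hr
      simp only [map_sub, map_add, map_mul, eval_C, eval_X, hp x hx] at hrx
      linarith
  have h₁ : a + b = 0 := by simpa using affine_vanishes ![0, 1, 0] (mem_zeroSet_span.2 (by simp))
  have h₂ : a - b = 0 := by
    simpa [sub_eq_add_neg] using affine_vanishes ![0, -1, 0] (mem_zeroSet_span.2 (by simp))
  have h₃ : a + c = 0 := by simpa using affine_vanishes ![0, 0, 1] (mem_zeroSet_span.2 (by simp))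
  obtain rfl : a = 0 := by linarith
  obtain rfl : b = 0 := by linarith
  obtain rfl : c = 0 := by linarith
  simpa using hr

/-- The real radical of ⟨x² + y² + z² - 1, x² + y² + z - 1, x⟩ equals
⟨x, y² + z - 1, yz, z² - z⟩ in ℝ[x,y,z]. -/
theorem realRadical_planar_spheroloid :
    realRadical (Ideal.span
        ({(X 0) ^ 2 + (X 1) ^ 2 + (X 2) ^ 2 - 1,
          (X 0) ^ 2 + (X 1) ^ 2 + X 2 - 1,
          X 0} : Set (MvPolynomial (Fin 3) ℝ)))
      = Ideal.span ({X 0, (X 1) ^ 2 + X 2 - 1, X 1 * X 2, (X 2) ^ 2 - X 2} :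
          Set (MvPolynomial (Fin 3) ℝ)) :=
  (congrArg vanishIdeal zeroSet_spheroloidIdeal).trans vanishIdeal_zeroSet_threePointsIdeal
end

section
/- The system f = {x² + y² - 2, 2xy² - x + 1} has exactly six complex solutions, and all of them are real. -/
noncomputable def xa : ℝ := (1 + Real.sqrt 3) / 2
noncomputable def xc : ℝ := (1 - Real.sqrt 3) / 2
noncomputable def yb : ℝ := Real.sqrt ((2 - Real.sqrt 3) / 2)
noncomputable def yd : ℝ := Real.sqrt ((2 + Real.sqrt 3) / 2)

lemma s3_sq : Real.sqrt 3 ^ 2 = 3 := Real.sq_sqrt (by norm_num)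
lemma s3_nonneg : 0 ≤ Real.sqrt 3 := Real.sqrt_nonneg 3
lemma s3_lt_two : Real.sqrt 3 < 2 := by nlinarith [s3_sq, s3_nonneg]
lemma s3_gt_one : 1 < Real.sqrt 3 := by nlinarith [s3_sq, s3_nonneg]
lemma yb_sq : yb ^ 2 = (2 - Real.sqrt 3) / 2 := Real.sq_sqrt (by nlinarith [s3_lt_two])
lemma yd_sq : yd ^ 2 = (2 + Real.sqrt 3) / 2 := Real.sq_sqrt (by nlinarith [s3_nonneg])
lemma yb_pos : 0 < yb := Real.sqrt_pos.2 (by nlinarith [s3_lt_two])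
lemma yd_pos : 0 < yd := Real.sqrt_pos.2 (by nlinarith [s3_nonneg])

lemma hsc : ((Real.sqrt 3 : ℝ) : ℂ) ^ 2 = 3 := by exact_mod_cast s3_sq
lemma hybc : ((yb : ℝ) : ℂ) ^ 2 = (2 - ((Real.sqrt 3 : ℝ) : ℂ)) / 2 := by
  exact_mod_cast yb_sq
lemma hydc : ((yd : ℝ) : ℂ) ^ 2 = (2 + ((Real.sqrt 3 : ℝ) : ℂ)) / 2 := by
  exact_mod_cast yd_sq
lemma xa_c : ((xa : ℝ) : ℂ) = (1 + ((Real.sqrt 3 : ℝ) : ℂ)) / 2 := by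
  unfold xa; push_cast; ring
lemma xc_c : ((xc : ℝ) : ℂ) = (1 - ((Real.sqrt 3 : ℝ) : ℂ)) / 2 := by
  unfold xc; push_cast; ring

lemma classify (x y : ℂ) (h1 : x ^ 2 + y ^ 2 - 2 = 0)
    (h2 : 2 * x * y ^ 2 - x + 1 = 0) :
    (x = -1 ∧ y = 1) ∨ (x = -1 ∧ y = -1) ∨
    (x = (xa : ℂ) ∧ y = (yb : ℂ)) ∨ (x = (xa : ℂ) ∧ y = -(yb : ℂ)) ∨
    (x = (xc : ℂ) ∧ y = (yd : ℂ)) ∨ (x = (xc : ℂ) ∧ y = -(yd : ℂ)) := by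
  have hcube : (x + 1) * ((x - (xa : ℂ)) * (x - (xc : ℂ))) = 0 := by
    rw [xa_c, xc_c]
    linear_combination x * h1 - h2 / 2 - (x + 1) / 4 * hsc
  rcases mul_eq_zero.1 hcube with hx | hq
  · -- x = -1
    have hx' : x = -1 := by linear_combination hx
    have hy : (y - 1) * (y + 1) = 0 := by
      linear_combination h1 - (x - 1) * hx'
    rcases mul_eq_zero.1 hy with hy' | hy'
    · exact Or.inl ⟨hx', by linear_combination hy'⟩
    · exact Or.inr (Or.inl ⟨hx', by linear_combination hy'⟩)
  · rcases mul_eq_zero.1 hq with hx | hx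
    · -- x = xa
      have hx' : x = (xa : ℂ) := by linear_combination hx
      have hy : (y - (yb : ℂ)) * (y + (yb : ℂ)) = 0 := by
        linear_combination h1 - (x + (xa : ℂ)) * hx' -
          ((xa : ℂ) + (1 + ((Real.sqrt 3 : ℝ) : ℂ)) / 2) * xa_c - hsc / 4 - hybc
      rcases mul_eq_zero.1 hy with hy' | hy'
      · exact Or.inr (Or.inr (Or.inl ⟨hx', by linear_combination hy'⟩))
      · exact Or.inr (Or.inr (Or.inr (Or.inl ⟨hx', by linear_combination hy'⟩)))
    · -- x = xc
      have hx' : x = (xc : ℂ) := by linear_combination hx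
      have hy : (y - (yd : ℂ)) * (y + (yd : ℂ)) = 0 := by
        linear_combination h1 - (x + (xc : ℂ)) * hx' -
          ((xc : ℂ) + (1 - ((Real.sqrt 3 : ℝ) : ℂ)) / 2) * xc_c - hsc / 4 - hydc
      rcases mul_eq_zero.1 hy with hy' | hy'
      · exact Or.inr (Or.inr (Or.inr (Or.inr (Or.inl ⟨hx', by linear_combination hy'⟩))))
      · exact Or.inr (Or.inr (Or.inr (Or.inr (Or.inr ⟨hx', by linear_combination hy'⟩))))

/-- The system {x² + y² - 2, 2xy² - x + 1} has exactly six complex solutions,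
all of which are real. -/
theorem six_real_solutions :
    ({p : ℂ × ℂ | p.1 ^ 2 + p.2 ^ 2 - 2 = 0 ∧
        2 * p.1 * p.2 ^ 2 - p.1 + 1 = 0}).ncard = 6 ∧
    (∀ p : ℂ × ℂ, (p.1 ^ 2 + p.2 ^ 2 - 2 = 0 ∧
        2 * p.1 * p.2 ^ 2 - p.1 + 1 = 0) →
      ∃ a b : ℝ, p = ((a : ℂ), (b : ℂ))) := by
  have hset : {p : ℂ × ℂ | p.1 ^ 2 + p.2 ^ 2 - 2 = 0 ∧
      2 * p.1 * p.2 ^ 2 - p.1 + 1 = 0} =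
      {((-1 : ℂ), (1 : ℂ)), ((-1 : ℂ), (-1 : ℂ)),
       ((xa : ℂ), (yb : ℂ)), ((xa : ℂ), -(yb : ℂ)),
       ((xc : ℂ), (yd : ℂ)), ((xc : ℂ), -(yd : ℂ))} := by
    ext ⟨x, y⟩
    simp only [Set.mem_setOf_eq, Set.mem_insert_iff, Set.mem_singleton_iff,
      Prod.mk.injEq]
    constructor
    · rintro ⟨h1, h2⟩
      exact classify x y h1 h2
    · rintro (⟨hx, hy⟩ | ⟨hx, hy⟩ | ⟨hx, hy⟩ | ⟨hx, hy⟩ | ⟨hx, hy⟩ | ⟨hx, hy⟩) <;>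
        subst hx <;> subst hy <;> constructor
      · norm_num
      · norm_num
      · norm_num
      · norm_num
      · rw [xa_c]; linear_combination hybc + hsc / 4
      · rw [xa_c]; linear_combination (1 + ((Real.sqrt 3 : ℝ) : ℂ)) * hybc - hsc / 2
      · rw [xa_c]; linear_combination hybc + hsc / 4
      · rw [xa_c]; linear_combination (1 + ((Real.sqrt 3 : ℝ) : ℂ)) * hybc - hsc / 2
      · rw [xc_c]; linear_combination hydc + hsc / 4
      · rw [xc_c]; linear_combination (1 - ((Real.sqrt 3 : ℝ) : ℂ)) * hydc - hsc / 2
      · rw [xc_c]; linear_combination hydc + hsc / 4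
      · rw [xc_c]; linear_combination (1 - ((Real.sqrt 3 : ℝ) : ℂ)) * hydc - hsc / 2
  -- real inequalities
  have hxa_pos : (0 : ℝ) < xa := by unfold xa; nlinarith [s3_nonneg]
  have hxc_gt : (-1 : ℝ) < xc := by unfold xc; nlinarith [s3_lt_two]
  have hxc_neg : xc < 0 := by unfold xc; nlinarith [s3_gt_one]
  have hxa_ne_m1 : ((xa : ℝ) : ℂ) ≠ -1 := by
    exact_mod_cast (show (xa : ℝ) ≠ -1 by linarith)
  have hxc_ne_m1 : ((xc : ℝ) : ℂ) ≠ -1 := by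
    exact_mod_cast (show (xc : ℝ) ≠ -1 by linarith)
  have hxa_ne_xc : ((xa : ℝ) : ℂ) ≠ ((xc : ℝ) : ℂ) := by
    exact_mod_cast (show (xa : ℝ) ≠ xc by linarith)
  have hyb_ne : ((yb : ℝ) : ℂ) ≠ -((yb : ℝ) : ℂ) := by
    have : (yb : ℝ) ≠ -yb := by nlinarith [yb_pos]
    exact_mod_cast this
  have hyd_ne : ((yd : ℝ) : ℂ) ≠ -((yd : ℝ) : ℂ) := by
    have : (yd : ℝ) ≠ -yd := by nlinarith [yd_pos]
    exact_mod_cast this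
  have h1ne : (1 : ℂ) ≠ -1 := by norm_num
  constructor
  · rw [hset]
    rw [Set.ncard_insert_of_notMem (by
      simp [Prod.ext_iff, h1ne, h1ne.symm, hxa_ne_m1, hxa_ne_m1.symm, hxc_ne_m1,
        hxc_ne_m1.symm, hxa_ne_xc, hxa_ne_xc.symm, hyb_ne, hyb_ne.symm, hyd_ne, hyd_ne.symm])]
    rw [Set.ncard_insert_of_notMem (by
      simp [Prod.ext_iff, h1ne, h1ne.symm, hxa_ne_m1, hxa_ne_m1.symm, hxc_ne_m1,
        hxc_ne_m1.symm, hxa_ne_xc, hxa_ne_xc.symm, hyb_ne, hyb_ne.symm, hyd_ne, hyd_ne.symm])]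
    rw [Set.ncard_insert_of_notMem (by
      simp [Prod.ext_iff, h1ne, h1ne.symm, hxa_ne_m1, hxa_ne_m1.symm, hxc_ne_m1,
        hxc_ne_m1.symm, hxa_ne_xc, hxa_ne_xc.symm, hyb_ne, hyb_ne.symm, hyd_ne, hyd_ne.symm])]
    rw [Set.ncard_insert_of_notMem (by
      simp [Prod.ext_iff, h1ne, h1ne.symm, hxa_ne_m1, hxa_ne_m1.symm, hxc_ne_m1,
        hxc_ne_m1.symm, hxa_ne_xc, hxa_ne_xc.symm, hyb_ne, hyb_ne.symm, hyd_ne, hyd_ne.symm])]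
    rw [Set.ncard_insert_of_notMem (by
      simp [Prod.ext_iff, h1ne, h1ne.symm, hxa_ne_m1, hxa_ne_m1.symm, hxc_ne_m1,
        hxc_ne_m1.symm, hxa_ne_xc, hxa_ne_xc.symm, hyb_ne, hyb_ne.symm, hyd_ne, hyd_ne.symm])]
    rw [Set.ncard_singleton]
  · intro p hp
    obtain ⟨x, y⟩ := p
    rcases classify x y hp.1 hp.2 with ⟨hx, hy⟩ | ⟨hx, hy⟩ | ⟨hx, hy⟩ | ⟨hx, hy⟩ |
        ⟨hx, hy⟩ | ⟨hx, hy⟩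
    · exact ⟨-1, 1, by simp [hx, hy]⟩
    · exact ⟨-1, -1, by simp [hx, hy]⟩
    · exact ⟨xa, yb, by simp [hx, hy]⟩
    · exact ⟨xa, -yb, by simp [hx, hy]⟩
    · exact ⟨xc, yd, by simp [hx, hy]⟩
    · exact ⟨xc, -yd, by simp [hx, hy]⟩
end

section
/- The radical of the ideal ⟨xyz, z(x²+y²+z²+y), y(y+z)⟩ in ℝ[x,y,z] contains the polynomials 2yz - y, 2y² + y, xy, and 4x²z + 4z³ + y. -/
open MvPolynomial

/-- The radical of ⟨xyz, z(x²+y²+z²+y), y(y+z)⟩ in ℝ[x,y,z] contains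
2yz - y, 2y² + y, xy, and 4x²z + 4z³ + y. -/
theorem radical_contains :
    ∀ p ∈ ({2 * X 1 * X 2 - X 1,
             2 * (X 1) ^ 2 + X 1,
             X 0 * X 1,
             4 * (X 0) ^ 2 * X 2 + 4 * (X 2) ^ 3 + X 1} :
        Set (MvPolynomial (Fin 3) ℝ)),
      p ∈ (Ideal.span ({X 0 * X 1 * X 2,
          X 2 * ((X 0) ^ 2 + (X 1) ^ 2 + (X 2) ^ 2 + X 1),
          X 1 * (X 1 + X 2)} : Set (MvPolynomial (Fin 3) ℝ))).radical := by
  set x : MvPolynomial (Fin 3) ℝ := X 0 with hx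
  set y : MvPolynomial (Fin 3) ℝ := X 1 with hy
  set z : MvPolynomial (Fin 3) ℝ := X 2 with hz
  set I : Ideal (MvPolynomial (Fin 3) ℝ) :=
    Ideal.span ({x * y * z, z * (x ^ 2 + y ^ 2 + z ^ 2 + y), y * (y + z)} :
      Set (MvPolynomial (Fin 3) ℝ)) with hI
  have h1 : x * y * z ∈ I := Ideal.subset_span (by simp)
  have h2 : z * (x ^ 2 + y ^ 2 + z ^ 2 + y) ∈ I := Ideal.subset_span (by simp)
  have h3 : y * (y + z) ∈ I := Ideal.subset_span (by simp)
  -- (2yz - y)^3 ∈ I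
  have hp1cube : (2 * y * z - y) ^ 3 ∈ I := by
    have heq : (2 * y * z - y) ^ 3 =
        (-(2 * z - 1) ^ 2 * x) * (x * y * z) +
        ((2 * z - 1) ^ 2 * y) * (z * (x ^ 2 + y ^ 2 + z ^ 2 + y)) +
        ((2 * z - 1) ^ 2 * (y * z - y - z ^ 2)) * (y * (y + z)) := by ring
    rw [heq]
    exact I.add_mem (I.add_mem (I.mul_mem_left _ h1) (I.mul_mem_left _ h2))
      (I.mul_mem_left _ h3)
  have hp1 : (2 * y * z - y) ∈ I.radical := ⟨3, hp1cube⟩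
  have h3r : y * (y + z) ∈ I.radical := Ideal.le_radical h3
  have h2r : z * (x ^ 2 + y ^ 2 + z ^ 2 + y) ∈ I.radical := Ideal.le_radical h2
  -- 2y² + y = 2·(y(y+z)) - (2yz - y)
  have hp2 : (2 * y ^ 2 + y) ∈ I.radical := by
    have : (2 * y ^ 2 + y) = 2 * (y * (y + z)) - (2 * y * z - y) := by ring
    rw [this]
    exact Ideal.sub_mem _ (Ideal.mul_mem_left _ _ h3r) hp1
  -- (xy)^2 ∈ I
  have hp3 : (x * y) ∈ I.radical := by
    refine ⟨2, ?_⟩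
    have heq : (x * y) ^ 2 = x ^ 2 * (y * (y + z)) + (-x) * (x * y * z) := by ring
    rw [heq]
    exact I.add_mem (I.mul_mem_left _ h3) (I.mul_mem_left _ h1)
  -- q = y(2z-1)² has q³ = (2z-1)³ (2yz-y)³ ∈ I
  have hq : (y * (2 * z - 1) ^ 2) ∈ I.radical := by
    refine ⟨3, ?_⟩
    have heq : (y * (2 * z - 1) ^ 2) ^ 3 = (2 * z - 1) ^ 3 * (2 * y * z - y) ^ 3 := by
      ring
    rw [heq]
    exact I.mul_mem_left _ hp1cube
  have hp4 : (4 * x ^ 2 * z + 4 * z ^ 3 + y) ∈ I.radical := by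
    have : (4 * x ^ 2 * z + 4 * z ^ 3 + y) =
        4 * (z * (x ^ 2 + y ^ 2 + z ^ 2 + y)) - (4 * z) * (y * (y + z)) +
          y * (2 * z - 1) ^ 2 := by ring
    rw [this]
    exact Ideal.add_mem _
      (Ideal.sub_mem _ (Ideal.mul_mem_left _ _ h2r) (Ideal.mul_mem_left _ _ h3r)) hq
  intro p hp
  simp only [Set.mem_insert_iff, Set.mem_singleton_iff] at hp
  rcases hp with rfl | rfl | rfl | rfl
  · exact hp1
  · exact hp2
  · exact hp3
  · exact hp4
end

section
/- Let I = ⟨f₁,…,f_k⟩ ⊆ ℝ[x₁,…,xₙ], r₁,…,r_s ∈ ℝ[x₁,…,xₙ], A = {x ∈ ℝⁿ : rᵢ(x) ≥ 0 for all i}, and J = ⟨f₁,…,f_k, r₁ - y₁², …, r_s - y_s²⟩ ⊆ ℝ[x₁,…,xₙ,y₁,…,y_s]. Then the A-radical of I, defined as the ideal of polynomials in ℝ[x₁,…,xₙ] vanishing on V_ℝ(I) ∩ A, equals √[ℝ]{J} ∩ ℝ[x₁,…,xₙ]. -/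
open MvPolynomial

lemma mem_vanishIdeal {σ : Type*} {S : Set (σ → ℝ)} {p : MvPolynomial σ ℝ} :
    p ∈ vanishIdeal S ↔ ∀ x ∈ S, MvPolynomial.eval x p = 0 := Iff.rfl

lemma span_vanish {σ : Type*} {S : Set (MvPolynomial σ ℝ)} {w : σ → ℝ}
    (h : ∀ g ∈ S, MvPolynomial.eval w g = 0) :
    ∀ g ∈ Ideal.span S, MvPolynomial.eval w g = 0 := by
  intro g hg
  exact RingHom.mem_ker.mp
    (Ideal.span_le.mpr (fun q hq => RingHom.mem_ker.mpr (h q hq)) hg)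

/-- The A-radical of I = ⟨f₁,…,f_k⟩, where A = {x : rᵢ(x) ≥ 0 ∀i}, equals the
intersection of the real radical of J = ⟨f, r₁ - y₁², …, r_s - y_s²⟩ with
ℝ[x₁,…,xₙ] (realized as the preimage under the inclusion ℝ[x] ↪ ℝ[x,y]). -/
theorem Aradical_eq_realRadical_slack {n k s : ℕ}
    (f : Fin k → MvPolynomial (Fin n) ℝ) (r : Fin s → MvPolynomial (Fin n) ℝ) :
    vanishIdeal {x : Fin n → ℝ |
        x ∈ zeroSet (Ideal.span (Set.range f)) ∧ ∀ i, 0 ≤ MvPolynomial.eval x (r i)}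
      = Ideal.comap
          (MvPolynomial.rename (Sum.inl : Fin n → Fin n ⊕ Fin s)).toRingHom
          (realRadical (Ideal.span
            (Set.range (fun i => MvPolynomial.rename Sum.inl (f i)) ∪
             Set.range (fun i : Fin s =>
               MvPolynomial.rename (Sum.inl : Fin n → Fin n ⊕ Fin s) (r i)
                 - (X (Sum.inr i)) ^ 2)))) := by
  ext p
  rw [Ideal.mem_comap]
  show (∀ x ∈ _, eval x p = 0) ↔ _ ∈ vanishIdeal _
  rw [mem_vanishIdeal]
  constructor
  · intro hp z hz
    show eval z (rename Sum.inl p) = 0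
    rw [eval_rename]
    apply hp
    refine ⟨?_, ?_⟩
    · intro g hg
      refine span_vanish (w := z ∘ Sum.inl) ?_ g hg
      rintro q ⟨i, rfl⟩
      rw [← eval_rename]
      exact hz _ (Ideal.subset_span (Or.inl ⟨i, rfl⟩))
    · intro i
      have h1 := hz _ (Ideal.subset_span (Or.inr ⟨i, rfl⟩))
      rw [map_sub, eval_rename] at h1
      simp only [map_pow, eval_X] at h1
      have : eval (z ∘ Sum.inl) (r i) = z (Sum.inr i) ^ 2 := by linarith
      rw [this]
      positivity
  · intro hp x hx
    set z : Fin n ⊕ Fin s → ℝ := Sum.elim x (fun i => Real.sqrt (eval x (r i))) with hzdef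
    have hz : ∀ g ∈ Ideal.span
        (Set.range (fun i => rename (Sum.inl : Fin n → Fin n ⊕ Fin s) (f i)) ∪
         Set.range (fun i : Fin s =>
           rename (Sum.inl : Fin n → Fin n ⊕ Fin s) (r i) - (X (Sum.inr i)) ^ 2)),
        eval z g = 0 := by
      refine span_vanish ?_
      rintro q (⟨i, rfl⟩ | ⟨i, rfl⟩)
      · rw [eval_rename]
        have : z ∘ Sum.inl = x := rfl
        rw [this]
        exact hx.1 _ (Ideal.subset_span ⟨i, rfl⟩)
      · rw [map_sub, eval_rename]
        have : z ∘ Sum.inl = x := rfl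
        rw [this]
        simp only [map_pow, eval_X, hzdef, Sum.elim_inr]
        rw [Real.sq_sqrt (hx.2 i)]
        ring
    have h2 := hp z hz
    have h3 : eval z ((rename (Sum.inl : Fin n → Fin n ⊕ Fin s)) p) = eval x p := by
      rw [eval_rename]; rfl
    rw [← h3]
    exact h2
end
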